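/- Let Λₙ(D₁) = (1/4)diag((α+v+β+2(n+1))(α-v+β+2(n+2)), 0) and Λₙ(D₃) be the 2×2 matrix with (1,2)-entry (1/4)(α-v+β+2(1+n))(α-v+β+2(2+n)), (2,1)-entry -((α+v+β+2(1+n))(α+v+β+2(2+n))(α-v+β+2)(α+v-β))/(4(α-v-β)(α+v+β+2)), and zero diagonal. Then there exists n ∈ ℕ such that Λₙ(D₁)Λₙ(D₃) ≠ Λₙ(D₃)Λₙ(D₁), provided α, β > -1 and |α-β| < |v| < α+β+2. -/
import Mathlib


open Matrix

noncomputable section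

/-- Eigenvalue `Λₙ(D₁)`. -/
def LamD1 (α β v : ℝ) (n : ℕ) : Matrix (Fin 2) (Fin 2) ℝ :=
  (1 / 4 : ℝ) • !![(α + v + β + 2 * ((n : ℝ) + 1)) * (α - v + β + 2 * ((n : ℝ) + 2)), 0; 0, 0]

/-- Eigenvalue `Λₙ(D₃)`. -/
def LamD3 (α β v : ℝ) (n : ℕ) : Matrix (Fin 2) (Fin 2) ℝ :=
  !![0, (1 / 4) * (α - v + β + 2 * (1 + (n : ℝ))) * (α - v + β + 2 * (2 + (n : ℝ)));
     -((α + v + β + 2 * (1 + (n : ℝ))) * (α + v + β + 2 * (2 + (n : ℝ))) *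
        (α - v + β + 2) * (α + v - β)) / (4 * (α - v - β) * (α + v + β + 2)), 0]

end

theorem stmt16 (α β v : ℝ) (hα : -1 < α) (hβ : -1 < β)
    (h1 : |α - β| < |v|) (h2 : |v| < α + β + 2) :
    ∃ n : ℕ, LamD1 α β v n * LamD3 α β v n ≠ LamD3 α β v n * LamD1 α β v n := by
  use 0
  intro h
  have hv := abs_lt.mp h2
  have he := congrFun (congrFun h 0) 1
  simp [LamD1, LamD3, Matrix.mul_apply, Fin.sum_univ_two, Matrix.smul_apply] at he
  rcases he with (h3 | h3) | h3 | h3 <;> linarith [hv.1, hv.2]
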